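/- arXiv:2403.15626 — 2 statements merged into one kernel-verified Lean document; each statement's English description precedes it below -/
import Mathlib

section
/- The total variation distance between N(μ1, σ^2) and N(μ2, σ^2) on R equals the probability that a standard normal random variable lies in the interval [-|μ1-μ2|/(2σ), |μ1-μ2|/(2σ)]. -/
open MeasureTheory ProbabilityTheory

noncomputable def tv {α : Type*} [MeasurableSpace α] (P Q : Measure α) : ℝ :=
  ⨆ A : {A : Set α // MeasurableSet A}, |(P A.1).toReal - (Q A.1).toReal|

/-! Two Gaussians with the same variance and means `μ₂ ≤ μ₁` have densities that cross
exactly once, at the midpoint `m`: `N(μ₁, σ²)` dominates to the right of `m` and `N(μ₂, σ²)`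
to the left. For such a pair of measures the supremum defining the total variation distance
is attained at the half-line `(m, ∞)`, and standardizing turns
`N(μ₁, σ²)(m, ∞) - N(μ₂, σ²)(m, ∞)` into `N(0, 1)(-d, ∞) - N(0, 1)(d, ∞) = N(0, 1)[-d, d]`
with `d = (μ₁ - μ₂) / (2σ)`. -/

open Set
open scoped NNReal

section TotalVariation

variable {α : Type*} [MeasurableSpace α] {P Q : Measure α} {S A : Set α}

lemma tv_comm (P Q : Measure α) : tv P Q = tv Q P :=
  iSup_congr fun _ => abs_sub_comm _ _

lemma measureReal_le_of_restrict_le [IsFiniteMeasure P] (h : Q.restrict S ≤ P.restrict S)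
    {B : Set α} (hB : B ⊆ S) : Q.real B ≤ P.real B := by
  have hQP : Q B ≤ P B := by
    simpa only [Measure.restrict_eq_self _ hB] using h B
  exact ENNReal.toReal_mono (measure_ne_top P B) hQP

lemma measureReal_sub_le_of_restrict_le [IsFiniteMeasure P] [IsFiniteMeasure Q]
    (hS : MeasurableSet S) (hA : MeasurableSet A)
    (hQP : Q.restrict S ≤ P.restrict S) (hPQ : P.restrict Sᶜ ≤ Q.restrict Sᶜ) :
    P.real A - Q.real A ≤ P.real S - Q.real S := by
  have hout : P.real (A \ S) ≤ Q.real (A \ S) :=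
    measureReal_le_of_restrict_le hPQ fun _ hx => hx.2
  have hin : Q.real (S \ A) ≤ P.real (S \ A) :=
    measureReal_le_of_restrict_le hQP sdiff_subset
  have hPA := measureReal_inter_add_sdiff (μ := P) (s := A) hS
  have hQA := measureReal_inter_add_sdiff (μ := Q) (s := A) hS
  have hPS := measureReal_inter_add_sdiff (μ := P) (s := S) hA
  have hQS := measureReal_inter_add_sdiff (μ := Q) (s := S) hA
  rw [inter_comm] at hPS hQS
  linarith

lemma abs_measureReal_sub_le_of_restrict_le [IsProbabilityMeasure P] [IsProbabilityMeasure Q]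
    (hS : MeasurableSet S) (hA : MeasurableSet A)
    (hQP : Q.restrict S ≤ P.restrict S) (hPQ : P.restrict Sᶜ ≤ Q.restrict Sᶜ) :
    |P.real A - Q.real A| ≤ P.real S - Q.real S := by
  refine abs_sub_le_iff.2 ⟨measureReal_sub_le_of_restrict_le hS hA hQP hPQ, ?_⟩
  -- the roles of `P` and `Q` are exchanged by passing to the complement of `S`
  have hcompl := measureReal_sub_le_of_restrict_le hS.compl hA hPQ (by rwa [compl_compl])
  rw [probReal_compl_eq_one_sub hS, probReal_compl_eq_one_sub hS] at hcompl
  linarith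

lemma tv_eq_of_restrict_le [IsProbabilityMeasure P] [IsProbabilityMeasure Q]
    (hS : MeasurableSet S)
    (hQP : Q.restrict S ≤ P.restrict S) (hPQ : P.restrict Sᶜ ≤ Q.restrict Sᶜ) :
    tv P Q = P.real S - Q.real S := by
  have hbound (A : {A : Set α // MeasurableSet A}) :
      |(P A.1).toReal - (Q A.1).toReal| ≤ P.real S - Q.real S :=
    abs_measureReal_sub_le_of_restrict_le hS A.2 hQP hPQ
  have hS_nonneg : 0 ≤ P.real S - Q.real S :=
    sub_nonneg.2 (measureReal_le_of_restrict_le hQP subset_rfl)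
  refine le_antisymm (ciSup_le hbound) ?_
  calc P.real S - Q.real S = |P.real S - Q.real S| := (abs_of_nonneg hS_nonneg).symm
    _ ≤ tv P Q := le_ciSup ⟨_, forall_mem_range.2 hbound⟩ ⟨S, hS⟩

end TotalVariation

lemma measureReal_Ioi_sub_measureReal_Ioi {μ : Measure ℝ} [IsFiniteMeasure μ]
    [NullSingletonClass μ] {a b : ℝ} (hab : a ≤ b) :
    μ.real (Ioi a) - μ.real (Ioi b) = μ.real (Icc a b) := by
  rw [← measureReal_sdiff (Ioi_subset_Ioi hab) measurableSet_Ioi, Ioi_sdiff_Ioi,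
    measureReal_congr Ioc_ae_eq_Icc]

section Gaussian

variable {μ₁ μ₂ : ℝ} {v : ℝ≥0}

lemma gaussianPDF_le_gaussianPDF {x : ℝ} (h : (x - μ₁) ^ 2 ≤ (x - μ₂) ^ 2) :
    gaussianPDF μ₂ v x ≤ gaussianPDF μ₁ v x := by
  refine ENNReal.ofReal_le_ofReal (mul_le_mul_of_nonneg_left ?_ (by positivity))
  exact Real.exp_le_exp.2 (div_le_div_of_nonneg_right (neg_le_neg h) (by positivity))

lemma gaussianReal_restrict_le_restrict (hv : v ≠ 0) {S : Set ℝ} (hS : MeasurableSet S)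
    (h : ∀ x ∈ S, (x - μ₁) ^ 2 ≤ (x - μ₂) ^ 2) :
    (gaussianReal μ₂ v).restrict S ≤ (gaussianReal μ₁ v).restrict S := by
  rw [gaussianReal_of_var_ne_zero _ hv, gaussianReal_of_var_ne_zero _ hv,
    restrict_withDensity hS, restrict_withDensity hS]
  exact withDensity_mono <|
    ae_restrict_of_forall_mem hS fun x hx => gaussianPDF_le_gaussianPDF (h x hx)

lemma tv_gaussianReal_of_le (hv : v ≠ 0) (h : μ₂ ≤ μ₁) :
    tv (gaussianReal μ₁ v) (gaussianReal μ₂ v) =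
      (gaussianReal μ₁ v).real (Ioi ((μ₁ + μ₂) / 2)) -
        (gaussianReal μ₂ v).real (Ioi ((μ₁ + μ₂) / 2)) := by
  refine tv_eq_of_restrict_le measurableSet_Ioi
    (gaussianReal_restrict_le_restrict hv measurableSet_Ioi fun x hx => ?_)
    (gaussianReal_restrict_le_restrict hv measurableSet_Ioi.compl fun x hx => ?_)
  · have hx : (μ₁ + μ₂) / 2 < x := hx
    nlinarith
  · have hx : x ≤ (μ₁ + μ₂) / 2 := not_lt.1 hx
    nlinarith

lemma gaussianReal_sq_eq_map (μ σ : ℝ) :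
    gaussianReal μ ⟨σ ^ 2, sq_nonneg σ⟩ =
      ((gaussianReal 0 1).map (σ * ·)).map (· + μ) := by
  rw [gaussianReal_map_const_mul, gaussianReal_map_add_const, mul_zero, zero_add, mul_one]
  rfl

lemma gaussianReal_sq_Ioi {σ : ℝ} (hσ : 0 < σ) (μ a : ℝ) :
    (gaussianReal μ ⟨σ ^ 2, sq_nonneg σ⟩).real (Ioi a) =
      (gaussianReal 0 1).real (Ioi ((a - μ) / σ)) := by
  rw [gaussianReal_sq_eq_map, measureReal_def, measureReal_def,
    Measure.map_apply (measurable_add_const μ) measurableSet_Ioi, preimage_add_const_Ioi,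
    Measure.map_apply (measurable_const_mul σ) measurableSet_Ioi, preimage_const_mul_Ioi₀ _ hσ]

lemma tv_gaussianReal_sq_of_le {σ : ℝ} (hσ : 0 < σ) (h : μ₂ ≤ μ₁) :
    tv (gaussianReal μ₁ ⟨σ ^ 2, sq_nonneg σ⟩) (gaussianReal μ₂ ⟨σ ^ 2, sq_nonneg σ⟩) =
      (gaussianReal 0 1).real (Icc (-((μ₁ - μ₂) / (2 * σ))) ((μ₁ - μ₂) / (2 * σ))) := by
  have hv : (⟨σ ^ 2, sq_nonneg σ⟩ : ℝ≥0) ≠ 0 := fun hv0 =>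
    (pow_pos hσ 2).ne' (congrArg Subtype.val hv0)
  have : NullSingletonClass (gaussianReal 0 1) := nullSingletonClass_gaussianReal one_ne_zero
  have hd : 0 ≤ (μ₁ - μ₂) / (2 * σ) := div_nonneg (sub_nonneg.2 h) (by positivity)
  rw [tv_gaussianReal_of_le hv h, gaussianReal_sq_Ioi hσ, gaussianReal_sq_Ioi hσ,
    ← measureReal_Ioi_sub_measureReal_Ioi (neg_le_self hd)]
  congr 3 <;> field_simp <;> ring

end Gaussian

/-- the TV distance between `N(μ₁,σ²)` and `N(μ₂,σ²)` equals the probability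
that a standard normal lies in `[-|μ₁-μ₂|/(2σ), |μ₁-μ₂|/(2σ)]`. -/
theorem tv_gaussianReal_eq_stdNormal_interval (μ₁ μ₂ σ : ℝ) (hσ : 0 < σ) :
    tv (gaussianReal μ₁ ⟨σ ^ 2, sq_nonneg σ⟩) (gaussianReal μ₂ ⟨σ ^ 2, sq_nonneg σ⟩) =
      ((gaussianReal 0 1)
        (Set.Icc (-(|μ₁ - μ₂| / (2 * σ))) (|μ₁ - μ₂| / (2 * σ)))).toReal := by
  rcases le_total μ₂ μ₁ with h | h
  · rw [abs_of_nonneg (sub_nonneg.2 h)]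
    exact tv_gaussianReal_sq_of_le hσ h
  · rw [tv_comm, abs_sub_comm, abs_of_nonneg (sub_nonneg.2 h)]
    exact tv_gaussianReal_sq_of_le hσ h
end

section
/- Convergence of the mixture approximation: assume for every x̄ ∈ R^d and almost every y, k(y|x) → k(y|x̄) as ‖x-x̄‖_∞ → 0. Then for any ε > 0 and any finite time t, there exists a sequence of finite measurable partitions {𝒳_0, ..., 𝒳_{t-1}} of R^d such that the iterative mixture approximation satisfies TV(P_t, P̂_t) ≤ ε. -/
/-!
By Scheffé's lemma, a.e. pointwise continuity of `k(y|x)` in `x` upgrades to continuity of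
`x ↦ k(·|x)` in `L¹`. Given the current approximate density `q`, tightness leaves only a small
`q`-mass outside a compact set; covering that set by finitely many neighbourhoods on which
`k(·|x)` moves little in `L¹` and refining the cover gives a partition for which replacing
`k(·|x)` by `k(·|tag)` costs at most `δ` in `L¹` against `q`. Propagation through a Markov
kernel does not increase `L¹` distances, so the errors add up to `‖p_t - p̂_t‖₁ ≤ t δ`, and the
total variation distance is at most the `L¹` distance.
-/

open MeasureTheory Filter

open Set Topology ENNReal

section Scheffe

variable {α : Type*} [MeasurableSpace α] {μ : Measure α}

theorem abs_sub_eq_add_sub_two_mul_min (a b : ℝ) : |a - b| = a + b - 2 * min a b := by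
  rcases le_total a b with h | h
  · rw [min_eq_left h, abs_of_nonpos (by linarith)]; ring
  · rw [min_eq_right h, abs_of_nonneg (by linarith)]; ring

/-- Scheffé's lemma. -/
theorem tendsto_integral_norm_sub_of_tendsto_ae {ι : Type*} {l : Filter ι}
    [l.IsCountablyGenerated] {F : ι → α → ℝ} {f : α → ℝ} (hF : ∀ i, Integrable (F i) μ)
    (hf : Integrable f μ) (hF₀ : ∀ i, 0 ≤ F i) (hf₀ : 0 ≤ f)
    (hFf : ∀ i, ∫ x, F i x ∂μ = ∫ x, f x ∂μ)
    (hlim : ∀ᵐ x ∂μ, Tendsto (F · x) l (𝓝 (f x))) :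
    Tendsto (fun i => ∫ x, ‖F i x - f x‖ ∂μ) l (𝓝 0) := by
  have hmin : ∀ i, Integrable (fun x => min (F i x) (f x)) μ := fun i => (hF i).inf hf
  have hnorm : ∀ i, ∫ x, ‖F i x - f x‖ ∂μ = 2 * ∫ x, f x ∂μ - 2 * ∫ x, min (F i x) (f x) ∂μ := by
    intro i
    simp_rw [Real.norm_eq_abs, abs_sub_eq_add_sub_two_mul_min]
    rw [integral_sub (f := fun x => F i x + f x) ((hF i).add hf) ((hmin i).const_mul 2),
      integral_add (hF i) hf, integral_const_mul, hFf]
    ring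
  have hdom : Tendsto (fun i => ∫ x, min (F i x) (f x) ∂μ) l (𝓝 (∫ x, f x ∂μ)) := by
    refine tendsto_integral_filter_of_dominated_convergence f
      (.of_forall fun i => (hmin i).aestronglyMeasurable)
      (.of_forall fun i => ae_of_all _ fun x => ?_) hf ?_
    · rw [Real.norm_of_nonneg (le_min (hF₀ i x) (hf₀ x))]
      exact min_le_right _ _
    · filter_upwards [hlim] with x hx
      simpa using hx.min (tendsto_const_nhds (x := f x))
  rw [tendsto_congr hnorm]
  simpa using (tendsto_const_nhds (x := 2 * ∫ x, f x ∂μ)).sub (hdom.const_mul 2)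

end Scheffe

section TotalVariation

variable {α : Type*} [MeasurableSpace α] {μ : Measure α}

theorem toReal_withDensity_ofReal_apply {f : α → ℝ} (hf : Integrable f μ) (hf₀ : 0 ≤ᵐ[μ] f)
    {A : Set α} (hA : MeasurableSet A) :
    (μ.withDensity (fun x => ENNReal.ofReal (f x)) A).toReal = ∫ x in A, f x ∂μ := by
  rw [withDensity_apply _ hA, ← ofReal_integral_eq_lintegral_ofReal hf.integrableOn
    (ae_restrict_of_ae hf₀), ENNReal.toReal_ofReal (integral_nonneg_of_ae (ae_restrict_of_ae hf₀))]

theorem tv_withDensity_le {f g : α → ℝ} (hf : Integrable f μ) (hg : Integrable g μ)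
    (hf₀ : 0 ≤ᵐ[μ] f) (hg₀ : 0 ≤ᵐ[μ] g) :
    tv (μ.withDensity fun x => ENNReal.ofReal (f x)) (μ.withDensity fun x => ENNReal.ofReal (g x))
      ≤ (∫⁻ x, ‖f x - g x‖ₑ ∂μ).toReal := by
  have : Nonempty {A : Set α // MeasurableSet A} := ⟨⟨∅, .empty⟩⟩
  refine ciSup_le fun ⟨A, hA⟩ => ?_
  rw [toReal_withDensity_ofReal_apply hf hf₀ hA, toReal_withDensity_ofReal_apply hg hg₀ hA,
    ← integral_sub hf.integrableOn hg.integrableOn,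
    ← integral_norm_eq_lintegral_enorm (f := fun x => f x - g x) (hf.sub hg).aestronglyMeasurable]
  calc |∫ x in A, f x - g x ∂μ|
      ≤ ∫ x in A, ‖f x - g x‖ ∂μ := by
        simpa only [Real.norm_eq_abs] using norm_integral_le_integral_norm (fun x => f x - g x)
    _ ≤ ∫ x, ‖f x - g x‖ ∂μ :=
      setIntegral_le_integral (hf.sub hg).norm (ae_of_all _ fun _ => norm_nonneg _)

end TotalVariation

section MarkovDensity

variable {α : Type*} [MeasurableSpace α] {μ : Measure α}

structure IsMarkovDensity (μ : Measure α) (k : α → α → ℝ) : Prop where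
  measurable : Measurable (Function.uncurry k)
  nonneg : ∀ x y, 0 ≤ k x y
  integral_eq_one : ∀ x, ∫ y, k x y ∂μ = 1

noncomputable def propagate (μ : Measure α) (k : α → α → ℝ) (p : α → ℝ) (y : α) : ℝ :=
  ∫ x, k x y * p x ∂μ

namespace IsMarkovDensity

variable {k : α → α → ℝ} (hk : IsMarkovDensity μ k)
include hk

theorem measurable_apply (x : α) : Measurable (k x) := hk.measurable.of_uncurry_left

theorem integrable (x : α) : Integrable (k x) μ :=
  Integrable.of_integral_ne_zero (by rw [hk.integral_eq_one]; exact one_ne_zero)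

theorem lintegral_enorm_eq_one (x : α) : ∫⁻ y, ‖k x y‖ₑ ∂μ = 1 := by
  rw [← ofReal_integral_norm_eq_lintegral_enorm (hk.integrable x)]
  simp [Real.norm_of_nonneg (hk.nonneg x _), hk.integral_eq_one]

theorem comp {τ : α → α} (hτ : Measurable τ) : IsMarkovDensity μ (fun x => k (τ x)) :=
  ⟨hk.measurable.comp (hτ.prodMap measurable_id), fun x => hk.nonneg (τ x),
    fun x => hk.integral_eq_one (τ x)⟩

theorem lintegral_enorm_sub_le_two (x x' : α) : ∫⁻ y, ‖k x y - k x' y‖ₑ ∂μ ≤ 2 :=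
  calc ∫⁻ y, ‖k x y - k x' y‖ₑ ∂μ ≤ ∫⁻ y, ‖k x y‖ₑ + ‖k x' y‖ₑ ∂μ :=
        lintegral_mono fun y => enorm_sub_le
    _ = 2 := by
      rw [lintegral_add_left (hk.measurable_apply x).enorm, hk.lintegral_enorm_eq_one,
        hk.lintegral_enorm_eq_one, one_add_one_eq_two]

theorem lintegral_enorm_sub_le_add (x x' c : α) :
    ∫⁻ y, ‖k x y - k x' y‖ₑ ∂μ ≤ ∫⁻ y, ‖k x y - k c y‖ₑ ∂μ + ∫⁻ y, ‖k x' y - k c y‖ₑ ∂μ := by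
  simp only [← edist_eq_enorm_sub]
  exact lintegral_edist_triangle (hk.measurable_apply x).aestronglyMeasurable
    (hk.measurable_apply c).aestronglyMeasurable

theorem tendsto_lintegral_enorm_sub {l : Filter α} [l.IsCountablyGenerated] {c : α}
    (hc : ∀ᵐ y ∂μ, Tendsto (fun x => k x y) l (𝓝 (k c y))) :
    Tendsto (fun x => ∫⁻ y, ‖k x y - k c y‖ₑ ∂μ) l (𝓝 0) := by
  have h := tendsto_integral_norm_sub_of_tendsto_ae hk.integrable (hk.integrable c)
    (fun x => hk.nonneg x) (hk.nonneg c)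
    (fun x => by rw [hk.integral_eq_one, hk.integral_eq_one]) hc
  rw [← ENNReal.ofReal_zero]
  exact (ENNReal.tendsto_ofReal h).congr fun x =>
    ofReal_integral_norm_eq_lintegral_enorm ((hk.integrable x).sub (hk.integrable c))

variable [SFinite μ] {p : α → ℝ}

theorem integrable_prod_mul (hp : Integrable p μ) :
    Integrable (fun z : α × α => k z.1 z.2 * p z.1) (μ.prod μ) := by
  have hmeas : AEStronglyMeasurable (fun z : α × α => k z.1 z.2 * p z.1) (μ.prod μ) :=
    hk.measurable.aestronglyMeasurable.mul hp.aestronglyMeasurable.comp_fst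
  refine (integrable_prod_iff hmeas).2 ⟨ae_of_all _ fun x => (hk.integrable x).mul_const (p x), ?_⟩
  simpa [norm_mul, integral_mul_const, Real.norm_of_nonneg (hk.nonneg _ _), hk.integral_eq_one]
    using hp.norm

theorem ae_integrable_mul (hp : Integrable p μ) :
    ∀ᵐ y ∂μ, Integrable (fun x => k x y * p x) μ :=
  (hk.integrable_prod_mul hp).prod_left_ae

theorem integrable_propagate (hp : Integrable p μ) : Integrable (propagate μ k p) μ :=
  (hk.integrable_prod_mul hp).integral_prod_right

theorem lintegral_enorm_propagate_sub_le {k' : α → α → ℝ} (hk' : IsMarkovDensity μ k')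
    {q : α → ℝ} (hp : Integrable p μ) (hq : Integrable q μ) :
    ∫⁻ y, ‖propagate μ k p y - propagate μ k' q y‖ₑ ∂μ ≤
      ∫⁻ x, ‖p x - q x‖ₑ ∂μ + ∫⁻ x, (∫⁻ y, ‖k x y - k' x y‖ₑ ∂μ) * ‖q x‖ₑ ∂μ := by
  have hpt : ∀ᵐ y ∂μ, ‖propagate μ k p y - propagate μ k' q y‖ₑ ≤
      ∫⁻ x, ‖k x y‖ₑ * ‖p x - q x‖ₑ + ‖k x y - k' x y‖ₑ * ‖q x‖ₑ ∂μ := by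
    filter_upwards [hk.ae_integrable_mul hp, hk'.ae_integrable_mul hq] with y hkp hk'q
    rw [propagate, propagate, ← integral_sub hkp hk'q]
    refine (enorm_integral_le_lintegral_enorm _).trans (lintegral_mono fun x => ?_)
    rw [← enorm_mul, ← enorm_mul, show k x y * p x - k' x y * q x =
      k x y * (p x - q x) + (k x y - k' x y) * q x by ring]
    exact enorm_add_le _ _
  have hmeas : AEMeasurable (fun z : α × α =>
      ‖k z.1 z.2‖ₑ * ‖p z.1 - q z.1‖ₑ + ‖k z.1 z.2 - k' z.1 z.2‖ₑ * ‖q z.1‖ₑ) (μ.prod μ) :=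
    (hk.measurable.enorm.aemeasurable.mul (hp.sub hq).aemeasurable.enorm.comp_fst).add
      ((hk.measurable.sub hk'.measurable).enorm.aemeasurable.mul hq.aemeasurable.enorm.comp_fst)
  calc ∫⁻ y, ‖propagate μ k p y - propagate μ k' q y‖ₑ ∂μ
      ≤ ∫⁻ y, ∫⁻ x, ‖k x y‖ₑ * ‖p x - q x‖ₑ + ‖k x y - k' x y‖ₑ * ‖q x‖ₑ ∂μ ∂μ :=
        lintegral_mono_ae hpt
    _ = ∫⁻ x, ‖p x - q x‖ₑ + (∫⁻ y, ‖k x y - k' x y‖ₑ ∂μ) * ‖q x‖ₑ ∂μ := by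
      rw [← lintegral_lintegral_swap hmeas]
      refine lintegral_congr fun x => ?_
      rw [lintegral_add_left ((hk.measurable_apply x).enorm.mul_const _),
        lintegral_mul_const _ (hk.measurable_apply x).enorm, hk.lintegral_enorm_eq_one, one_mul,
        lintegral_mul_const (f := fun y => ‖k x y - k' x y‖ₑ) _
          ((hk.measurable_apply x).sub (hk'.measurable_apply x)).enorm]
    _ = _ := lintegral_add_left' (hp.sub hq).aemeasurable.enorm _

end IsMarkovDensity

end MarkovDensity

structure TaggedPartition (α : Type*) [MeasurableSpace α] where
  card : ℕ
  set : Fin card → Set α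
  tag : Fin card → α
  measurableSet_set : ∀ j, MeasurableSet (set j)
  pairwise_disjoint : Pairwise (Function.onFun Disjoint set)
  iUnion_set : ⋃ j, set j = univ
  tag_mem : ∀ j, tag j ∈ set j

namespace TaggedPartition

variable {α : Type*} [MeasurableSpace α]

instance [Inhabited α] : Inhabited (TaggedPartition α) :=
  ⟨{ card := 1
     set := fun _ => univ
     tag := fun _ => default
     measurableSet_set := fun _ => .univ
     pairwise_disjoint := Subsingleton.pairwise
     iUnion_set := iUnion_const _
     tag_mem := fun _ => mem_univ _ }⟩

variable (π : TaggedPartition α)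

theorem exists_mem_set (x : α) : ∃ j, x ∈ π.set j :=
  mem_iUnion.1 (π.iUnion_set ▸ mem_univ x)

noncomputable def index (x : α) : Fin π.card := (π.exists_mem_set x).choose

theorem mem_set_index (x : α) : x ∈ π.set (π.index x) := (π.exists_mem_set x).choose_spec

theorem index_eq_iff {x : α} {j : Fin π.card} : π.index x = j ↔ x ∈ π.set j :=
  ⟨fun h => h ▸ π.mem_set_index x, fun hx => by_contra fun hne =>
    disjoint_left.1 (π.pairwise_disjoint hne) (π.mem_set_index x) hx⟩

theorem measurable_index : Measurable π.index :=
  measurable_to_countable' fun j => by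
    simpa only [preimage, mem_singleton_iff, π.index_eq_iff, ofPred_mem_eq] using
      π.measurableSet_set j

noncomputable def tagOf (x : α) : α := π.tag (π.index x)

theorem measurable_tagOf : Measurable π.tagOf :=
  (measurable_of_countable π.tag).comp π.measurable_index

theorem tagOf_eq {x : α} {j : Fin π.card} (hx : x ∈ π.set j) : π.tagOf x = π.tag j := by
  rw [tagOf, π.index_eq_iff.2 hx]

theorem tagOf_mem_set_index (x : α) : π.tagOf x ∈ π.set (π.index x) := π.tag_mem _

theorem exists_subordinate {ι : Type*} [Finite ι] (B : ι → Set α)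
    (hB : ∀ i, MeasurableSet (B i)) (hcov : ⋃ i, B i = univ) :
    ∃ π : TaggedPartition α, ∀ j, ∃ i, π.set j ⊆ B i := by
  classical
  obtain ⟨n, ⟨e⟩⟩ := Finite.exists_equiv_fin ι
  set D := disjointed (B ∘ e.symm)
  have hD : ∀ m, MeasurableSet (D m) := fun m =>
    disjointedRec (fun _ _ ht => ht.diff (hB _)) (hB _)
  have hDcov : ⋃ m, D m = univ := by
    rw [iUnion_disjointed, ← hcov]
    exact e.symm.iSup_comp (g := B)
  let f := Fintype.equivFin {m : Fin n // (D m).Nonempty}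
  refine ⟨⟨_, fun j => D (f.symm j), fun j => (f.symm j).2.some, fun j => hD _, ?_, ?_,
    fun j => (f.symm j).2.some_mem⟩, fun j => ⟨e.symm (f.symm j), disjointed_subset _ _⟩⟩
  · exact fun j j' h => disjoint_disjointed _ fun h' => h (f.symm.injective (Subtype.ext h'))
  · refine eq_univ_of_forall fun x => ?_
    obtain ⟨m, hm⟩ := mem_iUnion.1 (hDcov ▸ mem_univ x)
    exact mem_iUnion.2 ⟨f ⟨m, x, hm⟩, by simpa using hm⟩

theorem exists_lintegral_le [TopologicalSpace α] [T2Space α] [OpensMeasurableSpace α]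
    (μ : Measure α) [IsFiniteMeasure μ] [μ.InnerRegularCompactLTTop]
    {E : α → α → ℝ≥0∞} {M : ℝ≥0∞} (hM : M ≠ ∞) (hEM : ∀ x c, E x c ≤ M)
    (hE_tri : ∀ x x' c, E x x' ≤ E x c + E x' c) (hE : ∀ c, Tendsto (E · c) (𝓝 c) (𝓝 0))
    {η : ℝ≥0∞} (hη : 0 < η) :
    ∃ π : TaggedPartition α, ∫⁻ x, E x (π.tagOf x) ∂μ ≤ η := by
  obtain ⟨a, ha, haη⟩ : ∃ a, 0 < a ∧ M * a + a * μ univ < η := by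
    have h : Tendsto (fun a => M * a + a * μ univ) (𝓝 0) (𝓝 (M * 0 + 0 * μ univ)) :=
      (ENNReal.Tendsto.const_mul tendsto_id (Or.inr hM)).add
        (ENNReal.Tendsto.mul_const tendsto_id (Or.inr (measure_ne_top μ univ)))
    rw [mul_zero, zero_mul, add_zero] at h
    have h' : ∀ᶠ a in 𝓝[>] (0 : ℝ≥0∞), 0 < a ∧ M * a + a * μ univ < η :=
      eventually_mem_nhdsWithin.and ((h.eventually_lt_const hη).filter_mono nhdsWithin_le_nhds)
    exact h'.exists
  obtain ⟨K, -, hK, hμK⟩ :=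
    MeasurableSet.univ.exists_isCompact_sdiff_lt (measure_ne_top μ univ) ha.ne'
  have hU : ∀ c, ∃ U, IsOpen U ∧ c ∈ U ∧ ∀ x ∈ U, E x c < a / 2 := fun c => by
    obtain ⟨U, hUE, hUo, hcU⟩ :=
      mem_nhds_iff.1 ((hE c).eventually_lt_const (ENNReal.half_pos ha.ne'))
    exact ⟨U, hUo, hcU, hUE⟩
  choose U hUo hcU hUE using hU
  obtain ⟨s, hs⟩ := hK.elim_finite_subcover U hUo fun x _ => mem_iUnion.2 ⟨x, hcU x⟩
  obtain ⟨π, hπ⟩ := exists_subordinate (fun o : Option s => o.elim Kᶜ fun c => U c)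
    (by rintro (_ | c); exacts [hK.isClosed.measurableSet.compl, (hUo c).measurableSet])
    (eq_univ_of_forall fun x => by
      by_cases hx : x ∈ K
      · obtain ⟨c, hc, hxc⟩ := mem_iUnion₂.1 (hs hx)
        exact mem_iUnion.2 ⟨some ⟨c, hc⟩, hxc⟩
      · exact mem_iUnion.2 ⟨none, hx⟩)
  have hbound : ∀ x, E x (π.tagOf x) ≤ Kᶜ.indicator (fun _ => M) x + a := fun x => by
    obtain ⟨o, ho⟩ := hπ (π.index x)
    have hx := ho (π.mem_set_index x)
    have hτ := ho (π.tagOf_mem_set_index x)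
    rcases o with _ | c
    · rw [indicator_of_mem (show x ∈ Kᶜ from hx)]
      exact (hEM _ _).trans le_self_add
    · calc E x (π.tagOf x) ≤ E x c + E (π.tagOf x) c := hE_tri _ _ _
        _ ≤ a / 2 + a / 2 := add_le_add (hUE c x hx).le (hUE c _ hτ).le
        _ = a := ENNReal.add_halves a
        _ ≤ _ := le_add_self
  refine ⟨π, ?_⟩
  calc ∫⁻ x, E x (π.tagOf x) ∂μ ≤ ∫⁻ x, Kᶜ.indicator (fun _ => M) x + a ∂μ :=
        lintegral_mono hbound
    _ = M * μ Kᶜ + a * μ univ := by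
      rw [lintegral_add_right _ measurable_const,
        lintegral_indicator_const hK.isClosed.measurableSet.compl, lintegral_const]
    _ ≤ M * a + a * μ univ := by
      rw [compl_eq_univ_sdiff]
      gcongr
    _ ≤ η := haη.le

variable {μ : Measure α} {k : α → α → ℝ}

noncomputable def mixture (μ : Measure α) (k : α → α → ℝ) (q : α → ℝ) (y : α) : ℝ :=
  ∑ j, (∫ x in π.set j, q x ∂μ) * k (π.tag j) y

theorem mixture_nonneg (hk : IsMarkovDensity μ k) {q : α → ℝ} (hq₀ : 0 ≤ q) :
    0 ≤ π.mixture μ k q :=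
  fun y => Finset.sum_nonneg fun _ _ => mul_nonneg (integral_nonneg hq₀) (hk.nonneg _ y)

theorem mixture_eq_propagate {q : α → ℝ} (hq : Integrable q μ) :
    π.mixture μ k q = propagate μ (fun x => k (π.tagOf x)) q := by
  funext y
  have hpiece : ∀ j, EqOn (fun x => k (π.tagOf x) y * q x) (fun x => k (π.tag j) y * q x)
      (π.set j) := fun j x hx => by simp only [π.tagOf_eq hx]
  rw [propagate, ← setIntegral_univ, ← π.iUnion_set, integral_iUnion_fintype π.measurableSet_set
    π.pairwise_disjoint fun j => IntegrableOn.congr_fun (hq.integrableOn.const_mul _)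
      (hpiece j).symm (π.measurableSet_set j)]
  refine Finset.sum_congr rfl fun j _ => ?_
  rw [setIntegral_congr_fun (π.measurableSet_set j) (hpiece j), integral_const_mul, mul_comm]

theorem withDensity_mixture (hk : IsMarkovDensity μ k) {q : α → ℝ} (hq : Integrable q μ)
    (hq₀ : 0 ≤ q) :
    μ.withDensity (fun y => ENNReal.ofReal (π.mixture μ k q y)) =
      ∑ j, μ.withDensity (fun x => ENNReal.ofReal (q x)) (π.set j) •
        μ.withDensity (fun y => ENNReal.ofReal (k (π.tag j) y)) := by
  have hw₀ : ∀ j, 0 ≤ ∫ x in π.set j, q x ∂μ := fun j => integral_nonneg hq₀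
  have hw : ∀ j, μ.withDensity (fun x => ENNReal.ofReal (q x)) (π.set j) =
      ENNReal.ofReal (∫ x in π.set j, q x ∂μ) := fun j => by
    rw [withDensity_apply _ (π.measurableSet_set j),
      ofReal_integral_eq_lintegral_ofReal hq.integrableOn (ae_of_all _ hq₀)]
  have hmix : ∀ y, ENNReal.ofReal (π.mixture μ k q y) =
      ∑ j, ENNReal.ofReal (∫ x in π.set j, q x ∂μ) * ENNReal.ofReal (k (π.tag j) y) := fun y => by
    rw [mixture, ENNReal.ofReal_sum_of_nonneg fun j _ => mul_nonneg (hw₀ j) (hk.nonneg _ _)]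
    exact Finset.sum_congr rfl fun j _ => ENNReal.ofReal_mul (hw₀ j)
  ext s hs
  rw [withDensity_apply _ hs, Measure.coe_finsetSum, Finset.sum_apply]
  simp_rw [hmix, hw, Measure.smul_apply, withDensity_apply _ hs, smul_eq_mul]
  rw [lintegral_finsetSum _ fun j _ => (hk.measurable_apply _).ennreal_ofReal.const_mul _]
  simp_rw [lintegral_const_mul _ (hk.measurable_apply _).ennreal_ofReal]

end TaggedPartition

section MixtureApproximation

variable {α : Type*} [MeasurableSpace α] {μ : Measure α} {k : α → α → ℝ}

theorem IsMarkovDensity.exists_partition_selector [TopologicalSpace α] [PolishSpace α]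
    [BorelSpace α] [Inhabited α] [SFinite μ] (hk : IsMarkovDensity μ k)
    (hcont : ∀ c, ∀ᵐ y ∂μ, Tendsto (fun x => k x y) (𝓝 c) (𝓝 (k c y))) {η : ℝ≥0∞}
    (hη : 0 < η) :
    ∃ π : (α → ℝ) → TaggedPartition α, ∀ q, Integrable q μ →
      ∫⁻ x, (∫⁻ y, ‖k x y - k ((π q).tagOf x) y‖ₑ ∂μ) * ‖q x‖ₑ ∂μ ≤ η := by
  have h : ∀ q : α → ℝ, Integrable q μ → ∃ π : TaggedPartition α,
      ∫⁻ x, (∫⁻ y, ‖k x y - k (π.tagOf x) y‖ₑ ∂μ) * ‖q x‖ₑ ∂μ ≤ η := by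
    intro q hq
    have : IsFiniteMeasure (μ.withDensity fun x => ‖q x‖ₑ) := isFiniteMeasure_withDensity hq.2.ne
    obtain ⟨π, hπ⟩ := TaggedPartition.exists_lintegral_le (μ.withDensity fun x => ‖q x‖ₑ)
      ofNat_ne_top hk.lintegral_enorm_sub_le_two hk.lintegral_enorm_sub_le_add
      (fun c => hk.tendsto_lintegral_enorm_sub (hcont c)) hη
    refine ⟨π, le_of_eq_of_le ?_ hπ⟩
    have hE : Measurable fun x => ∫⁻ y, ‖k x y - k (π.tagOf x) y‖ₑ ∂μ :=
      (hk.measurable.sub (hk.comp π.measurable_tagOf).measurable).enorm.lintegral_prod_right'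
    rw [lintegral_withDensity_eq_lintegral_mul₀ hq.aemeasurable.enorm hE.aemeasurable]
    exact lintegral_congr fun x => mul_comm _ _
  choose! π hπ using h
  exact ⟨π, hπ⟩

/-- The partition used at each step is chosen by `π` from the current approximate density. -/
noncomputable def mixtureApprox (μ : Measure α) (k : α → α → ℝ)
    (π : (α → ℝ) → TaggedPartition α) (p₀ : α → ℝ) : ℕ → α → ℝ
  | 0 => p₀
  | n + 1 => (π (mixtureApprox μ k π p₀ n)).mixture μ k (mixtureApprox μ k π p₀ n)

variable {π : (α → ℝ) → TaggedPartition α} {p₀ : α → ℝ}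

theorem mixtureApprox_nonneg (hk : IsMarkovDensity μ k) (hp₀ : 0 ≤ p₀) (n : ℕ) :
    0 ≤ mixtureApprox μ k π p₀ n := by
  induction n with
  | zero => exact hp₀
  | succ n ih => exact (π _).mixture_nonneg hk ih

theorem mixtureApprox_succ_eq_propagate {n : ℕ} (hq : Integrable (mixtureApprox μ k π p₀ n) μ) :
    mixtureApprox μ k π p₀ (n + 1) =
      propagate μ (fun x => k ((π (mixtureApprox μ k π p₀ n)).tagOf x))
        (mixtureApprox μ k π p₀ n) :=
  TaggedPartition.mixture_eq_propagate _ hq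

variable [SFinite μ]

theorem integrable_mixtureApprox (hk : IsMarkovDensity μ k) (hp₀ : Integrable p₀ μ) (n : ℕ) :
    Integrable (mixtureApprox μ k π p₀ n) μ := by
  induction n with
  | zero => exact hp₀
  | succ n ih =>
    rw [mixtureApprox_succ_eq_propagate ih]
    exact (hk.comp (π _).measurable_tagOf).integrable_propagate ih

theorem IsMarkovDensity.integrable_of_propagate (hk : IsMarkovDensity μ k) {p : ℕ → α → ℝ}
    (hp : ∀ n, p (n + 1) = propagate μ k (p n)) (hp₀ : Integrable (p 0) μ) (n : ℕ) :
    Integrable (p n) μ := by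
  induction n with
  | zero => exact hp₀
  | succ n ih => exact hp n ▸ hk.integrable_propagate ih

theorem lintegral_enorm_sub_mixtureApprox_le (hk : IsMarkovDensity μ k) {p : ℕ → α → ℝ}
    (hp : ∀ n, p (n + 1) = propagate μ k (p n)) (hp₀ : Integrable (p 0) μ) {η : ℝ≥0∞}
    (hπ : ∀ q, Integrable q μ →
      ∫⁻ x, (∫⁻ y, ‖k x y - k ((π q).tagOf x) y‖ₑ ∂μ) * ‖q x‖ₑ ∂μ ≤ η) (n : ℕ) :
    ∫⁻ x, ‖p n x - mixtureApprox μ k π (p 0) n x‖ₑ ∂μ ≤ n * η := by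
  induction n with
  | zero => simp [mixtureApprox]
  | succ n ih =>
    have hq := integrable_mixtureApprox (π := π) hk hp₀ n
    rw [hp, mixtureApprox_succ_eq_propagate hq, Nat.cast_succ, add_one_mul]
    exact (hk.lintegral_enorm_propagate_sub_le (hk.comp (π _).measurable_tagOf)
      (hk.integrable_of_propagate hp hp₀ n) hq).trans (add_le_add ih (hπ _ hq))

end MixtureApproximation

theorem mixture_approximation_convergence_general {d : ℕ}
    (k : (Fin d → ℝ) → (Fin d → ℝ) → ℝ)
    (hk_meas : Measurable (Function.uncurry k))
    (hk_nonneg : ∀ x y, 0 ≤ k x y)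
    (hk_prob : ∀ x, ∫ y, k x y = 1)
    -- a.e. continuity of the kernel density in the initial point (sup norm topology,
    -- which coincides with the product topology on `Fin d → ℝ`)
    (hk_cont : ∀ xbar : Fin d → ℝ, ∀ᵐ y : (Fin d → ℝ),
      Tendsto (fun x => k x y) (nhds xbar) (nhds (k xbar y)))
    -- the true densities, propagated through the kernel
    (p : ℕ → (Fin d → ℝ) → ℝ)
    (hp_nonneg : ∀ t x, 0 ≤ p t x)
    (hp0_int : ∫ x, p 0 x = 1)
    (hp_rec : ∀ t y, p (t + 1) y = ∫ x, k x y * p t x)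
    (P : ℕ → Measure (Fin d → ℝ))
    (hP : ∀ t, P t = volume.withDensity (fun x => ENNReal.ofReal (p t x))) :
    ∀ ε > (0 : ℝ), ∀ t : ℕ,
      ∃ (K : ℕ → ℕ) (X : (i : ℕ) → Fin (K i) → Set (Fin d → ℝ))
        (xr : (i : ℕ) → Fin (K i) → (Fin d → ℝ)) (Phat : ℕ → Measure (Fin d → ℝ)),
        (∀ i j, MeasurableSet (X i j)) ∧
        (∀ i, Pairwise (Function.onFun Disjoint (X i))) ∧
        (∀ i, (⋃ j, X i j) = Set.univ) ∧
        (∀ i j, xr i j ∈ X i j) ∧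
        Phat 0 = P 0 ∧
        (∀ i, Phat (i + 1) =
          ∑ j, Phat i (X i j) •
            volume.withDensity (fun y => ENNReal.ofReal (k (xr i j) y))) ∧
        tv (P t) (Phat t) ≤ ε := by
  intro ε hε t
  have hk : IsMarkovDensity volume k := ⟨hk_meas, hk_nonneg, hk_prob⟩
  have hp : ∀ n, p (n + 1) = propagate volume k (p n) := fun n => funext (hp_rec n)
  have hp₀ : Integrable (p 0) := .of_integral_ne_zero (by rw [hp0_int]; exact one_ne_zero)
  have hδ : 0 < ε / (t + 1) := by positivity
  obtain ⟨π, hπ⟩ := hk.exists_partition_selector hk_cont (ENNReal.ofReal_pos.2 hδ)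
  set phat := mixtureApprox volume k π (p 0)
  have hphat₀ : ∀ n, 0 ≤ phat n := mixtureApprox_nonneg hk (hp_nonneg 0)
  have hphat : ∀ n, Integrable (phat n) := integrable_mixtureApprox hk hp₀
  refine ⟨fun i => (π (phat i)).card, fun i => (π (phat i)).set, fun i => (π (phat i)).tag,
    fun i => volume.withDensity fun y => ENNReal.ofReal (phat i y),
    fun i => (π _).measurableSet_set, fun i => (π _).pairwise_disjoint,
    fun i => (π _).iUnion_set, fun i => (π _).tag_mem, (hP 0).symm,
    fun i => (π _).withDensity_mixture hk (hphat i) (hphat₀ i), ?_⟩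
  rw [hP]
  calc tv _ _ ≤ (∫⁻ x, ‖p t x - phat t x‖ₑ).toReal :=
        tv_withDensity_le (hk.integrable_of_propagate hp hp₀ t) (hphat t)
          (ae_of_all _ (hp_nonneg t)) (ae_of_all _ (hphat₀ t))
    _ ≤ (t * ENNReal.ofReal (ε / (t + 1))).toReal :=
        ENNReal.toReal_mono (by finiteness) (lintegral_enorm_sub_mixtureApprox_le hk hp hp₀ hπ t)
    _ = ε * (t / (t + 1)) := by
        rw [ENNReal.toReal_mul, ENNReal.toReal_ofReal hδ.le, ENNReal.toReal_natCast]
        ring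
    _ ≤ ε := mul_le_of_le_one_right hε.le (div_le_one_of_le₀ (by linarith) (by positivity))

/-- convergence of the mixture approximation: for any `ε > 0` and finite
time `t`, there exist finite measurable partitions (one per time step, with
representative points) such that the resulting iterative mixture approximation is
`ε`-close in total variation to the true distribution at time `t`. -/
theorem mixture_approximation_convergence {d : ℕ}
    (k : (Fin d → ℝ) → (Fin d → ℝ) → ℝ)
    (hk_meas : Measurable (Function.uncurry k))
    (hk_nonneg : ∀ x y, 0 ≤ k x y)
    (hk_prob : ∀ x, ∫ y, k x y = 1)
    -- a.e. continuity of the kernel density in the initial point (sup norm topology,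
    -- which coincides with the product topology on `Fin d → ℝ`)
    (hk_cont : ∀ xbar : Fin d → ℝ, ∀ᵐ y : (Fin d → ℝ),
      Tendsto (fun x => k x y) (nhds xbar) (nhds (k xbar y)))
    -- the true densities, propagated through the kernel
    (p : ℕ → (Fin d → ℝ) → ℝ)
    (hp_meas : ∀ t, Measurable (p t)) (hp_nonneg : ∀ t x, 0 ≤ p t x)
    (hp0_int : ∫ x, p 0 x = 1)
    (hp_rec : ∀ t y, p (t + 1) y = ∫ x, k x y * p t x)
    (P : ℕ → Measure (Fin d → ℝ))
    (hP : ∀ t, P t = volume.withDensity (fun x => ENNReal.ofReal (p t x))) :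
    ∀ ε > (0 : ℝ), ∀ t : ℕ,
      ∃ (K : ℕ → ℕ) (X : (i : ℕ) → Fin (K i) → Set (Fin d → ℝ))
        (xr : (i : ℕ) → Fin (K i) → (Fin d → ℝ)) (Phat : ℕ → Measure (Fin d → ℝ)),
        (∀ i j, MeasurableSet (X i j)) ∧
        (∀ i, Pairwise (Function.onFun Disjoint (X i))) ∧
        (∀ i, (⋃ j, X i j) = Set.univ) ∧
        (∀ i j, xr i j ∈ X i j) ∧
        Phat 0 = P 0 ∧
        (∀ i, Phat (i + 1) =
          ∑ j, Phat i (X i j) •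
            volume.withDensity (fun y => ENNReal.ofReal (k (xr i j) y))) ∧
        tv (P t) (Phat t) ≤ ε :=
  mixture_approximation_convergence_general k hk_meas hk_nonneg hk_prob hk_cont p hp_nonneg hp0_int
    hp_rec P hP
end
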